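/- Let a : 𝕋 → (0,∞) and b₁, b₂ : 𝕋 → (0,∞) be continuous with ‖b₁ − b₂‖_∞ ≤ ε. Define ρ_i(y) = a(y) b_i(y) / ∫_0^1 a(y') b_i(y') dy'. Then ‖ρ₁ − ρ₂‖_∞ ≤ 2ε · (sup a)(inf a)^{-1}(inf b₁ ∧ inf b₂)^{-2}(sup b₁ ∨ sup b₂ + inf b₁ ∧ inf b₂) up to an explicit constant; in particular the normalized product is Lipschitz in b in the region where a, b are bounded above and below. -/

import Mathlib

open MeasureTheory

/-!
Write `ρᵢ = fᵢ / ∫ fᵢ` with `fᵢ = a bᵢ`. Then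
`f₁/I₁ - f₂/I₂ = (f₁ - f₂)/I₁ + f₂ (I₂ - I₁)/(I₁ I₂)`, and on a probability space the
normalizing constants are bounded below by the lower bound `m` of the `fᵢ` and differ by at
most `‖f₁ - f₂‖_∞`. Both terms are thus `O(‖f₁ - f₂‖_∞)`, and `‖a b₁ - a b₂‖_∞ ≤ (sup a) ε`.
-/

theorem abs_div_sub_div_le {x₁ x₂ I₁ I₂ m M δ η : ℝ} (hm : 0 < m) (hI₁ : m ≤ I₁) (hI₂ : m ≤ I₂)
    (hx₂ : 0 ≤ x₂) (hx₂M : x₂ ≤ M) (hx : |x₁ - x₂| ≤ δ) (hI : |I₁ - I₂| ≤ η) :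
    |x₁ / I₁ - x₂ / I₂| ≤ δ / m + M * η / m ^ 2 := by
  have hI₁pos : 0 < I₁ := hm.trans_le hI₁
  have hI₂pos : 0 < I₂ := hm.trans_le hI₂
  have hsplit : x₁ / I₁ - x₂ / I₂ = (x₁ - x₂) / I₁ + x₂ * (I₂ - I₁) / (I₁ * I₂) := by
    field_simp; ring
  have hfirst : |(x₁ - x₂) / I₁| ≤ δ / m := by
    rw [abs_div, abs_of_pos hI₁pos]
    exact div_le_div₀ ((abs_nonneg _).trans hx) hx hm hI₁
  have hsecond : |x₂ * (I₂ - I₁) / (I₁ * I₂)| ≤ M * η / m ^ 2 := by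
    rw [abs_div, abs_mul, abs_of_nonneg hx₂, abs_sub_comm, abs_of_pos (mul_pos hI₁pos hI₂pos), sq]
    exact div_le_div₀ (mul_nonneg (hx₂.trans hx₂M) ((abs_nonneg _).trans hI))
      (mul_le_mul hx₂M hI (abs_nonneg _) (hx₂.trans hx₂M)) (mul_pos hm hm)
      (mul_le_mul hI₁ hI₂ hm.le hI₁pos.le)
  calc |x₁ / I₁ - x₂ / I₂| ≤ |(x₁ - x₂) / I₁| + |x₂ * (I₂ - I₁) / (I₁ * I₂)| :=
        hsplit ▸ abs_add_le _ _
    _ ≤ δ / m + M * η / m ^ 2 := add_le_add hfirst hsecond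

section ProbabilityMeasure

variable {α : Type*} [MeasurableSpace α] {μ : Measure α} [IsProbabilityMeasure μ]

theorem le_integral_of_forall_le {f : α → ℝ} (hf : Integrable f μ) {m : ℝ} (hfm : ∀ x, m ≤ f x) :
    m ≤ ∫ x, f x ∂μ := by
  simpa using integral_mono (integrable_const m) hf hfm

theorem abs_integral_sub_integral_le {f₁ f₂ : α → ℝ} (hf₁ : Integrable f₁ μ)
    (hf₂ : Integrable f₂ μ) {δ : ℝ} (hδ : ∀ x, |f₁ x - f₂ x| ≤ δ) :
    |∫ x, f₁ x ∂μ - ∫ x, f₂ x ∂μ| ≤ δ := by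
  rw [← integral_sub hf₁ hf₂, ← Real.norm_eq_abs]
  simpa using norm_integral_le_of_norm_le_const (μ := μ) (f := fun x ↦ f₁ x - f₂ x)
    (.of_forall hδ)

theorem abs_div_integral_sub_div_integral_le {f₁ f₂ : α → ℝ} (hf₁ : Integrable f₁ μ)
    (hf₂ : Integrable f₂ μ) {m M δ : ℝ} (hm : 0 < m) (hf₁m : ∀ x, m ≤ f₁ x)
    (hf₂m : ∀ x, m ≤ f₂ x) (hf₂M : ∀ x, f₂ x ≤ M) (hδ : ∀ x, |f₁ x - f₂ x| ≤ δ) (x : α) :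
    |f₁ x / ∫ x, f₁ x ∂μ - f₂ x / ∫ x, f₂ x ∂μ| ≤ δ / m + M * δ / m ^ 2 :=
  abs_div_sub_div_le hm (le_integral_of_forall_le hf₁ hf₁m) (le_integral_of_forall_le hf₂ hf₂m)
    (hm.le.trans (hf₂m x)) (hf₂M x) (hδ x) (abs_integral_sub_integral_le hf₁ hf₂ hδ)

end ProbabilityMeasure

instance : IsProbabilityMeasure (volume : Measure UnitAddCircle) :=
  ⟨by simp [AddCircle.measure_univ]⟩

theorem normalized_product_lipschitz_general
    (a b₁ b₂ : AddCircle (1:ℝ) → ℝ) (ma Ma mb Mb ε : ℝ)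
    (ha : Continuous a) (hb₁ : Continuous b₁) (hb₂ : Continuous b₂)
    (hma : 0 < ma) (hmb : 0 < mb)
    (haB : ∀ y, ma ≤ a y ∧ a y ≤ Ma)
    (hb₁B : ∀ y, mb ≤ b₁ y ∧ b₁ y ≤ Mb)
    (hb₂B : ∀ y, mb ≤ b₂ y ∧ b₂ y ≤ Mb)
    (hdist : ∀ y, |b₁ y - b₂ y| ≤ ε) :
    ∀ y : AddCircle (1:ℝ),
      |a y * b₁ y / (∫ y' : AddCircle (1:ℝ), a y' * b₁ y')
          - a y * b₂ y / (∫ y' : AddCircle (1:ℝ), a y' * b₂ y')|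
        ≤ ε * (Ma / (ma * mb)) * (1 + Ma * Mb / (ma * mb)) := by
  intro y
  have ha₀ (y) : 0 ≤ a y := hma.le.trans (haB y).1
  have hlower {b : AddCircle (1:ℝ) → ℝ} (hbB : ∀ y, mb ≤ b y ∧ b y ≤ Mb) (y) :
      ma * mb ≤ a y * b y :=
    mul_le_mul (haB y).1 (hbB y).1 hmb.le (ha₀ y)
  have hupper (y) : a y * b₂ y ≤ Ma * Mb :=
    mul_le_mul (haB y).2 (hb₂B y).2 (hmb.le.trans (hb₂B y).1) (ha₀ y |>.trans (haB y).2)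
  have hclose (y) : |a y * b₁ y - a y * b₂ y| ≤ Ma * ε := by
    rw [← mul_sub, abs_mul, abs_of_nonneg (ha₀ y)]
    exact mul_le_mul (haB y).2 (hdist y) (abs_nonneg _) ((ha₀ y).trans (haB y).2)
  have hint {b : AddCircle (1:ℝ) → ℝ} (hb : Continuous b) : Integrable (fun y ↦ a y * b y) :=
    (ha.mul hb).integrable_of_hasCompactSupport (.of_compactSpace _)
  calc _ ≤ Ma * ε / (ma * mb) + Ma * Mb * (Ma * ε) / (ma * mb) ^ 2 :=
        abs_div_integral_sub_div_integral_le (hint hb₁) (hint hb₂) (mul_pos hma hmb)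
          (hlower hb₁B) (hlower hb₂B) hupper hclose y
    _ = ε * (Ma / (ma * mb)) * (1 + Ma * Mb / (ma * mb)) := by
      field_simp

/-- Lipschitz stability of the normalized product: if `a, b₁, b₂` are continuous on the
torus with `0 < ma ≤ a ≤ Ma`, `0 < mb ≤ bᵢ ≤ Mb` and `‖b₁ − b₂‖_∞ ≤ ε`, then the
normalized densities `ρᵢ = a bᵢ / ∫ a bᵢ` satisfy an explicit sup-norm bound of order `ε`. -/
theorem normalized_product_lipschitz
    (a b₁ b₂ : AddCircle (1:ℝ) → ℝ) (ma Ma mb Mb ε : ℝ)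
    (ha : Continuous a) (hb₁ : Continuous b₁) (hb₂ : Continuous b₂)
    (hma : 0 < ma) (hmb : 0 < mb) (hε : 0 ≤ ε)
    (haB : ∀ y, ma ≤ a y ∧ a y ≤ Ma)
    (hb₁B : ∀ y, mb ≤ b₁ y ∧ b₁ y ≤ Mb)
    (hb₂B : ∀ y, mb ≤ b₂ y ∧ b₂ y ≤ Mb)
    (hdist : ∀ y, |b₁ y - b₂ y| ≤ ε) :
    ∀ y : AddCircle (1:ℝ),
      |a y * b₁ y / (∫ y' : AddCircle (1:ℝ), a y' * b₁ y')
          - a y * b₂ y / (∫ y' : AddCircle (1:ℝ), a y' * b₂ y')|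
        ≤ ε * (Ma / (ma * mb)) * (1 + Ma * Mb / (ma * mb)) :=
  normalized_product_lipschitz_general a b₁ b₂ ma Ma mb Mb ε ha hb₁ hb₂ hma hmb haB hb₁B hb₂B hdist
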